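/- Let P be a program over 𝒰, A ⊆ 𝒰, and Q a program over 𝒰 ∖ A. Then Q is an A-simplification of P relative to ∅ if and only if AS(P)_{|Ā} = AS(Q) (i.e., Q is a faithful abstraction of P for omission of A). Moreover, every program P over 𝒰 is ∅-relativized A-simplifiable, for every A ⊆ 𝒰. -/
import Mathlib


/-- An extended rule over a type of atoms: head, positive body, negative body,
double-negated body. -/
structure ASPRule (Atom : Type) where
  head : Finset Atom
  pos : Finset Atom
  neg : Finset Atom
  nneg : Finset Atom
deriving DecidableEq

/-- A program is a finite set of rules. -/
abbrev ASPProgram (Atom : Type) [DecidableEq Atom] := Finset (ASPRule Atom)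

section Defs

variable {Atom : Type} [DecidableEq Atom] [Fintype Atom]

/-- A rule is over `S` if all its atoms lie in `S`. -/
def ruleOver (r : ASPRule Atom) (S : Finset Atom) : Prop :=
  r.head ⊆ S ∧ r.pos ⊆ S ∧ r.neg ⊆ S ∧ r.nneg ⊆ S

/-- A program is over `S` if all its rules are over `S`. -/
def progOver (P : ASPProgram Atom) (S : Finset Atom) : Prop :=
  ∀ r ∈ P, ruleOver r S

/-- `I` satisfies (is a model of) rule `r`. -/
def satRule (I : Finset Atom) (r : ASPRule Atom) : Prop :=
  ((r.head ∪ r.neg) ∩ I).Nonempty ∨ ¬ (r.pos ∪ r.nneg ⊆ I)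

/-- `I` is a model of program `P`. -/
def sat (I : Finset Atom) (P : ASPProgram Atom) : Prop :=
  ∀ r ∈ P, satRule I r

/-- The GL-reduct `P^I`. -/
def reduct (P : ASPProgram Atom) (I : Finset Atom) : ASPProgram Atom :=
  (P.filter (fun r => r.neg ∩ I = ∅ ∧ r.nneg ⊆ I)).image
    (fun r => ⟨r.head, r.pos, ∅, ∅⟩)

/-- The answer sets of `P`: minimal models of the reduct. -/
def AS (P : ASPProgram Atom) : Set (Finset Atom) :=
  {I | sat I (reduct P I) ∧ ∀ J ⊂ I, ¬ sat J (reduct P I)}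

/-- Projection of a program onto `𝒰 ∖ A`: rules with a head or negative-body atom
from `A` are dropped; in the remaining rules the atoms of `A` are removed from the
positive and double-negated bodies. -/
def projAway (P : ASPProgram Atom) (A : Finset Atom) : ASPProgram Atom :=
  (P.filter (fun r => r.neg ∩ A = ∅ ∧ r.head ∩ A = ∅)).image
    (fun r => ⟨r.head, r.pos \ A, r.neg, r.nneg \ A⟩)

/-- `R` is `A`-separated: a union of a program over `𝒰 ∖ A` and a program over `A`. -/
def ASeparated (R : ASPProgram Atom) (A : Finset Atom) : Prop :=
  ∃ R₁ R₂ : ASPProgram Atom, R = R₁ ∪ R₂ ∧ progOver R₁ Aᶜ ∧ progOver R₂ A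

/-- The defining equation of a (strong) `A`-simplification of `P` relative to `B`:
`AS(P ∪ R)_{|Ā} = AS(Q ∪ R_{|Ā})` for every `A`-separated program `R` over `B`. -/
def SimpEq (P : ASPProgram Atom) (A B : Finset Atom) (Q : ASPProgram Atom) : Prop :=
  ∀ R : ASPProgram Atom, progOver R B → ASeparated R A →
    (fun I => I \ A) '' AS (P ∪ R) = AS (Q ∪ projAway R A)

/-- The SE-models of `P`. -/
def SE (P : ASPProgram Atom) : Set (Finset Atom × Finset Atom) :=
  {p | p.1 ⊆ p.2 ∧ sat p.2 P ∧ sat p.1 (reduct P p.2)}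

/-- The (relativized) `B`-SE-models of `P`. -/
def SEB (B : Finset Atom) (P : ASPProgram Atom) : Set (Finset Atom × Finset Atom) :=
  {p | (p.1 = p.2 ∨ p.1 ⊂ p.2 ∩ B) ∧ sat p.2 P ∧
    (∀ Y' ⊂ p.2, Y' ∩ B = p.2 ∩ B → ¬ sat Y' (reduct P p.2)) ∧
    (p.1 ⊂ p.2 → ∃ X' ⊆ p.2, X' ∩ B = p.1 ∧ sat X' (reduct P p.2))}

/-- `SE^{A₁,A₂}(P)`: the `A₂`-SE-models `⟨X,Y⟩` of `P` with `Y ⊆ A₁`. -/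
def SERel (P : ASPProgram Atom) (A₁ A₂ : Finset Atom) : Set (Finset Atom × Finset Atom) :=
  {p | p ∈ SEB A₂ P ∧ p.2 ⊆ A₁}

/-- `P` satisfies `Δʳ` for `A`, `B`. -/
def DeltaR (P : ASPProgram Atom) (A B : Finset Atom) : Prop :=
  (∀ Y : Finset Atom, (Y, Y) ∈ SEB B P → A ∩ B ⊆ Y) ∧
  (∀ X Y : Finset Atom, (X, Y) ∈ SE P → (Y, Y) ∈ SEB B P → X \ A = Y \ A → X = Y) ∧
  (∀ X Y : Finset Atom, (X, Y) ∈ SEB B P → (X ∪ (Y ∩ A ∩ B), Y) ∈ SEB B P)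

/-- The family `𝓡^Y_{⟨P,A,B⟩}`. -/
def RFam (P : ASPProgram Atom) (A B Y : Finset Atom) : Set (Set (Finset Atom)) :=
  {S | ∃ A' ⊆ A, (Y ∪ A', Y ∪ A') ∈ SEB B P ∧
    S = {Z | ∃ X : Finset Atom, (X, Y ∪ A') ∈ SEB B P ∧ Z = X \ A}}

/-- `P` satisfies criterion `Ω_{A,B}`: for some `Y ⊆ 𝒰 ∖ A` the family
`𝓡^Y_{⟨P,A,B⟩}` is non-empty and has no `⊆`-least element. -/
def OmegaCrit (P : ASPProgram Atom) (A B : Finset Atom) : Prop :=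
  ∃ Y : Finset Atom, Y ⊆ Aᶜ ∧ (RFam P A B Y).Nonempty ∧
    ¬ ∃ S ∈ RFam P A B Y, ∀ T ∈ RFam P A B Y, S ⊆ T

/-- `⋂ 𝓡^Y_{⟨P,A,B⟩}`, taken to be `∅` when the family is empty. -/
def RInter (P : ASPProgram Atom) (A B Y : Finset Atom) : Set (Finset Atom) :=
  {X | (RFam P A B Y).Nonempty ∧ ∀ S ∈ RFam P A B Y, X ∈ S}

/-- The `A`-`B`-SE-models `SE^B_A(P)` of `P`. -/
def SEBA (P : ASPProgram Atom) (A B : Finset Atom) : Set (Finset Atom × Finset Atom) :=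
  {p | ∃ Y : Finset Atom, (Y, Y) ∈ SEB B P ∧ p = (Y \ A, Y \ A)} ∪
  {p | ∃ X Y : Finset Atom, (X, Y) ∈ SEB B P ∧ X ⊂ Y ∧
    (∀ Y' : Finset Atom, (Y', Y') ∈ SEB B P → Y' \ A = Y \ A →
      ∃ X' : Finset Atom, (X', Y') ∈ SEB B P ∧ X' \ A = X \ A) ∧
    p = (X \ A, Y \ A)}

end Defs

section Aux

variable {Atom : Type} [DecidableEq Atom] [Fintype Atom]

/-- The empty rule (an unsatisfiable constraint). -/
def eRule : ASPRule Atom := ⟨∅, ∅, ∅, ∅⟩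

lemma AS_empty_of_eRule {P0 : ASPProgram Atom} (h : (eRule : ASPRule Atom) ∈ P0) :
    AS P0 = ∅ := by
  ext I
  simp only [AS, Set.mem_setOf_eq, Set.mem_empty_iff_false, iff_false]
  rintro ⟨hsat, -⟩
  have hmem : (eRule : ASPRule Atom) ∈ reduct P0 I := by
    simp only [reduct, Finset.mem_image, Finset.mem_filter]
    exact ⟨eRule, ⟨h, by simp [eRule], by simp [eRule]⟩, rfl⟩
  have := hsat _ hmem
  simp [satRule, eRule] at this

lemma simpEq_iff {P Q : ASPProgram Atom} {A : Finset Atom} :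
    SimpEq P A (∅ : Finset Atom) Q ↔ (fun I => I \ A) '' AS P = AS Q := by
  constructor
  · intro h
    have := h ∅ (by intro r hr; simp at hr)
      ⟨∅, ∅, by simp, by intro r hr; simp at hr, by intro r hr; simp at hr⟩
    simpa [projAway] using this
  · intro h R hR _
    rcases R.eq_empty_or_nonempty with rfl | ⟨r, hr⟩
    · simpa [projAway] using h
    · have hre : r = eRule := by
        obtain ⟨h1, h2, h3, h4⟩ := hR r hr
        cases r
        simp only [eRule, ASPRule.mk.injEq]
        exact ⟨Finset.subset_empty.mp h1, Finset.subset_empty.mp h2,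
          Finset.subset_empty.mp h3, Finset.subset_empty.mp h4⟩
    -- the empty rule is in both programs, so both sides are empty
      subst hre
      have h1 : (eRule : ASPRule Atom) ∈ P ∪ R := Finset.mem_union_right _ hr
      have h2 : (eRule : ASPRule Atom) ∈ Q ∪ projAway R A := by
        refine Finset.mem_union_right _ ?_
        simp only [projAway, Finset.mem_image, Finset.mem_filter]
        exact ⟨eRule, ⟨hr, by simp [eRule], by simp [eRule]⟩, by simp [eRule]⟩
      rw [AS_empty_of_eRule h1, AS_empty_of_eRule h2]
      simp

/-- A program over `Aᶜ` whose answer sets are exactly the members of `F`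
(assuming all members of `F` are `⊆ Aᶜ`). -/
def mkProg (A : Finset Atom) (F : Finset (Finset Atom)) : ASPProgram Atom :=
  F.biUnion (fun S => S.image (fun a => ⟨{a}, ∅, Aᶜ \ S, S⟩)) ∪
  (Finset.univ.filter (fun I => I ⊆ Aᶜ ∧ I ∉ F)).image (fun I => ⟨∅, I, Aᶜ \ I, ∅⟩)

lemma progOver_mkProg (A : Finset Atom) (F : Finset (Finset Atom))
    (hF : ∀ S ∈ F, S ⊆ Aᶜ) : progOver (mkProg A F) Aᶜ := by
  intro r hr
  rcases Finset.mem_union.mp hr with h | h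
  · obtain ⟨S, hS, a, ha, rfl⟩ := by
      simpa only [Finset.mem_biUnion, Finset.mem_image] using h
    exact ⟨Finset.singleton_subset_iff.mpr (hF S hS ha), by simp,
      Finset.sdiff_subset, hF S hS⟩
  · obtain ⟨I, hI, rfl⟩ := by
      simpa only [Finset.mem_image, Finset.mem_filter] using h
    exact ⟨by simp, hI.2.1, Finset.sdiff_subset, by simp⟩

lemma AS_mkProg (A : Finset Atom) (F : Finset (Finset Atom))
    (hF : ∀ S ∈ F, S ⊆ Aᶜ) : AS (mkProg A F) = ↑F := by
  have hred : ∀ (I : Finset Atom) (r : ASPRule Atom), r ∈ reduct (mkProg A F) I ↔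
      ∃ r0 ∈ mkProg A F, r0.neg ∩ I = ∅ ∧ r0.nneg ⊆ I ∧
        r = ⟨r0.head, r0.pos, ∅, ∅⟩ := by
    intro I r
    simp only [reduct, Finset.mem_image, Finset.mem_filter]
    constructor
    · rintro ⟨r0, ⟨h1, h2, h3⟩, rfl⟩; exact ⟨r0, h1, h2, h3, rfl⟩
    · rintro ⟨r0, h1, h2, h3, rfl⟩; exact ⟨r0, ⟨h1, h2, h3⟩, rfl⟩
  ext I
  simp only [Finset.mem_coe]
  constructor
  · rintro ⟨hsat, hmin⟩
    -- first, I ⊆ Aᶜ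
    have hIA : I ⊆ Aᶜ := by
      by_contra hcon
      have hss : I ∩ Aᶜ ⊂ I := by
        refine ⟨Finset.inter_subset_left, fun hsub => hcon fun x hx => ?_⟩
        exact (Finset.mem_inter.mp (hsub hx)).2
      refine hmin _ hss ?_
      intro r hrr
      obtain ⟨r0, hr0, hneg, hnneg, rfl⟩ := (hred I r).mp hrr
      obtain ⟨hh, hp, -, -⟩ := progOver_mkProg A F hF r0 hr0
      rcases hsat _ hrr with hl | hrt
      · obtain ⟨x, hx⟩ := hl
        simp only [Finset.union_empty, Finset.mem_inter] at hx
        refine Or.inl ⟨x, ?_⟩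
        simp only [Finset.union_empty, Finset.mem_inter]
        exact ⟨hx.1, hx.2, hh hx.1⟩
      · refine Or.inr fun hsub => hrt ?_
        simp only [Finset.union_empty] at hsub ⊢
        exact hsub.trans Finset.inter_subset_left
    -- second, I ∈ F
    by_contra hIF
    have hr0 : (⟨∅, I, Aᶜ \ I, ∅⟩ : ASPRule Atom) ∈ mkProg A F := by
      refine Finset.mem_union_right _ (Finset.mem_image.mpr ⟨I, ?_, rfl⟩)
      simp [hIA, hIF]
    have hmem : (⟨∅, I, ∅, ∅⟩ : ASPRule Atom) ∈ reduct (mkProg A F) I :=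
      (hred I _).mpr ⟨_, hr0, by simp [Finset.sdiff_inter_self], by simp, rfl⟩
    have := hsat _ hmem
    simp [satRule] at this
  · intro hIF
    have hIA : I ⊆ Aᶜ := hF I hIF
    constructor
    · intro r hrr
      obtain ⟨r0, hr0, hneg, hnneg, rfl⟩ := (hred I r).mp hrr
      rcases Finset.mem_union.mp hr0 with h | h
      · obtain ⟨S, hS, a, ha, rfl⟩ := by
          simpa only [Finset.mem_biUnion, Finset.mem_image] using h
        -- conditions force S = I, so a ∈ I
        simp only at hneg hnneg
        have hSI : S = I := by
          refine Finset.Subset.antisymm hnneg fun x hx => ?_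
          by_contra hxS
          have : x ∈ (Aᶜ \ S) ∩ I := Finset.mem_inter.mpr
            ⟨Finset.mem_sdiff.mpr ⟨hIA hx, hxS⟩, hx⟩
          simp [hneg] at this
        subst hSI
        exact Or.inl ⟨a, by simp [ha]⟩
      · obtain ⟨I', hI', rfl⟩ := by
          simpa only [Finset.mem_image, Finset.mem_filter] using h
        simp only [Finset.mem_filter, Finset.mem_univ, true_and] at hI'
        simp only at hneg
        have hII' : I ⊆ I' := fun x hx => by
          by_contra hxI'
          have : x ∈ (Aᶜ \ I') ∩ I := Finset.mem_inter.mpr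
            ⟨Finset.mem_sdiff.mpr ⟨hIA hx, hxI'⟩, hx⟩
          simp [hneg] at this
        refine Or.inr fun hsub => ?_
        simp only [Finset.union_empty] at hsub
        exact hI'.2 (by rwa [Finset.Subset.antisymm hII' hsub] at hIF)
    · intro J hJ hsatJ
      obtain ⟨a, haI, haJ⟩ := Finset.exists_of_ssubset hJ
      have hr0 : (⟨{a}, ∅, Aᶜ \ I, I⟩ : ASPRule Atom) ∈ mkProg A F :=
        Finset.mem_union_left _ (Finset.mem_biUnion.mpr
          ⟨I, hIF, Finset.mem_image.mpr ⟨a, haI, rfl⟩⟩)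
      have hmem : (⟨{a}, ∅, ∅, ∅⟩ : ASPRule Atom) ∈ reduct (mkProg A F) I :=
        (hred I _).mpr ⟨_, hr0, by simp [Finset.sdiff_inter_self], by simp, rfl⟩
      have := hsatJ _ hmem
      simp [satRule, Finset.singleton_inter_of_notMem haJ] at this

end Aux

/-- `Q` is an `A`-simplification of `P` relative to `∅` iff
`AS(P)_{|Ā} = AS(Q)` (faithful abstraction); moreover every program is
`∅`-relativized `A`-simplifiable. -/
theorem stmt10 {Atom : Type} [DecidableEq Atom] [Fintype Atom]
    (P Q : ASPProgram Atom) (A : Finset Atom) (hQ : progOver Q Aᶜ) :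
    (SimpEq P A (∅ : Finset Atom) Q ↔ (fun I => I \ A) '' AS P = AS Q) ∧
      (∀ (P' : ASPProgram Atom) (A' : Finset Atom),
        ∃ Q' : ASPProgram Atom, progOver Q' A'ᶜ ∧ SimpEq P' A' (∅ : Finset Atom) Q') := by
  refine ⟨simpEq_iff, fun P' A' => ?_⟩
  classical
  set F : Finset (Finset Atom) :=
    Finset.univ.filter (fun S => S ∈ (fun I => I \ A') '' AS P') with hFdef
  have hF : ∀ S ∈ F, S ⊆ A'ᶜ := by
    intro S hS
    simp only [hFdef, Finset.mem_filter, Set.mem_image] at hS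
    obtain ⟨-, I, -, rfl⟩ := hS
    intro x hx
    simp only [Finset.mem_sdiff] at hx
    simpa using hx.2
  refine ⟨mkProg A' F, progOver_mkProg A' F hF, simpEq_iff.mpr ?_⟩
  rw [AS_mkProg A' F hF]
  ext S
  simp [hFdef]
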